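/- arXiv:2505.17004 — 2 statements merged into one kernel-verified Lean document; each statement's English description precedes it below -/
import Mathlib

section
/- Let B be a separable Banach space, γ a centered Gaussian measure on B with Cameron–Martin space H(γ), and μ a Borel probability measure on B with μ(H(γ)) = 1. Then the convolution ν = μ ⋆ γ is equivalent to γ (i.e., ν ≪ γ and γ ≪ ν). -/
open MeasureTheory ProbabilityTheory

/-- A Borel probability measure `γ` on a separable Banach space is *centered Gaussian* if every
continuous linear functional pushes it forward to a centered Gaussian on `ℝ`. -/
def IsCenteredGaussian {B : Type*} [NormedAddCommGroup B] [NormedSpace ℝ B]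
    [MeasurableSpace B] (γ : Measure B) : Prop :=
  ∀ L : B →L[ℝ] ℝ, ∃ v : NNReal, γ.map L = gaussianReal 0 v

/-- The Cameron–Martin space of `γ`, characterized (via the Cameron–Martin theorem) as the set of
shifts `h` for which the translate `γ^h = γ(· − h)` is mutually absolutely continuous with `γ`. -/
def cmSpace {B : Type*} [NormedAddCommGroup B] [MeasurableSpace B] (γ : Measure B) : Set B :=
  {h | γ.map (· + h) ≪ γ ∧ γ ≪ γ.map (· + h)}

/-- If `γ` is a centered Gaussian measure on a separable Banach space `B` and
`μ` is a Borel probability measure with `μ(H(γ)) = 1`, then the convolution `ν = μ ⋆ γ` is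
equivalent to `γ`. -/
theorem convolution_equivalent_gaussian
    {B : Type*} [NormedAddCommGroup B] [NormedSpace ℝ B] [CompleteSpace B]
    [TopologicalSpace.SeparableSpace B] [MeasurableSpace B] [BorelSpace B]
    (γ μ : Measure B) [IsProbabilityMeasure γ] [IsProbabilityMeasure μ]
    (hγ : IsCenteredGaussian γ)
    (hμ : μ (cmSpace γ) = 1)
    (ν : Measure B) (hν : ν = μ ∗ γ) :
    ν ≪ γ ∧ γ ≪ ν := by
  subst hν
  have hconv : ∀ t : Set B, MeasurableSet t →
      (μ ∗ γ) t = ∫⁻ x, γ (Prod.mk x ⁻¹' ((fun p : B × B => p.1 + p.2) ⁻¹' t)) ∂μ := by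
    intro t ht
    rw [Measure.conv, Measure.map_apply measurable_add ht,
      Measure.prod_apply (measurable_add ht)]
  have hmkpre : ∀ (t : Set B) (x : B),
      Prod.mk x ⁻¹' ((fun p : B × B => p.1 + p.2) ⁻¹' t) = (· + x) ⁻¹' t := by
    intro t x; ext y; simp [add_comm]
  constructor
  · -- ν ≪ γ
    intro s hs
    have ht : MeasurableSet (toMeasurable γ s) := measurableSet_toMeasurable γ s
    have hγt : γ (toMeasurable γ s) = 0 := by rw [measure_toMeasurable]; exact hs
    refine measure_mono_null (subset_toMeasurable γ s) ?_
    rw [hconv _ ht]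
    set f : B → ENNReal :=
      fun x => γ (Prod.mk x ⁻¹' ((fun p : B × B => p.1 + p.2) ⁻¹' (toMeasurable γ s))) with hfdef
    have hf : Measurable f := measurable_measure_prodMk_left (measurable_add ht)
    have hzero : cmSpace γ ⊆ {x | f x = 0} := by
      intro x hx
      have h0 : γ.map (· + x) (toMeasurable γ s) = 0 := hx.1 hγt
      rw [Measure.map_apply (measurable_add_const x) ht] at h0
      simpa [hfdef, hmkpre _ x] using h0
    have hmeas : MeasurableSet {x | f x = 0} := hf (measurableSet_singleton 0)
    have h1 : μ {x | f x = 0} = 1 :=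
      le_antisymm prob_le_one (hμ ▸ measure_mono hzero)
    have hae : f =ᵐ[μ] 0 := by
      rw [Filter.EventuallyEq, ae_iff]
      have hc : {x | ¬ f x = (0 : B → ENNReal) x} = {x | f x = 0}ᶜ := by
        ext x; simp
      rw [hc, measure_compl hmeas (measure_ne_top μ _), h1, measure_univ, tsub_self]
    exact (lintegral_eq_zero_iff hf).mpr hae
  · -- γ ≪ ν
    intro s hs
    have ht : MeasurableSet (toMeasurable (μ ∗ γ) s) := measurableSet_toMeasurable _ s
    have hνt : (μ ∗ γ) (toMeasurable (μ ∗ γ) s) = 0 := by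
      rw [measure_toMeasurable]; exact hs
    rw [hconv _ ht] at hνt
    set f : B → ENNReal :=
      fun x => γ (Prod.mk x ⁻¹' ((fun p : B × B => p.1 + p.2) ⁻¹' (toMeasurable (μ ∗ γ) s)))
      with hfdef
    have hf : Measurable f := measurable_measure_prodMk_left (measurable_add ht)
    have hae : f =ᵐ[μ] 0 := (lintegral_eq_zero_iff hf).mp hνt
    have h0 : μ {x | ¬ f x = 0} = 0 := by
      have := hae
      rw [Filter.EventuallyEq, ae_iff] at this
      simpa using this
    have hne : (cmSpace γ ∩ {x | f x = 0}).Nonempty := by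
      by_contra h
      rw [Set.not_nonempty_iff_eq_empty] at h
      have hsub : cmSpace γ ⊆ {x | ¬ f x = 0} := by
        intro x hx
        by_contra hfx
        simp only [Set.mem_setOf_eq, not_not] at hfx
        exact Set.eq_empty_iff_forall_notMem.mp h x ⟨hx, hfx⟩
      have : (1 : ENNReal) ≤ 0 := by
        calc (1 : ENNReal) = μ (cmSpace γ) := hμ.symm
          _ ≤ μ {x | ¬ f x = 0} := measure_mono hsub
          _ = 0 := h0
      simp at this
    obtain ⟨x, hxcm, hx0⟩ := hne
    have hmap0 : γ.map (· + x) (toMeasurable (μ ∗ γ) s) = 0 := by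
      rw [Measure.map_apply (measurable_add_const x) ht, ← hmkpre _ x]
      exact hx0
    exact measure_mono_null (subset_toMeasurable _ s) (hxcm.2 hmap0)
end

section
/- Let γ be a centered Gaussian measure on a separable Banach space B. Then the Cameron–Martin norm satisfies |h|_{H(γ)} = sup{ f(h) : f ∈ B*, C_γ(f)(f) ≤ 1 }, and H(γ) = { h ∈ B : |h|_{H(γ)} < ∞ }. -/
/-!
The reproducing property gives `g (ι (Cγ f)) = ⟪f, J g⟫` and `∫ g² = ‖J g‖²`, where `J g ∈ K` is
the `L²(γ)`-class of `g ∈ B*`. So the values `g (ι (Cγ f))` with `∫ g² ≤ 1` are the values of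
`⟪f, ·⟫` on the unit ball of the dense subspace `J(B*)`, whose supremum is `‖f‖ = ‖Cγ f‖`.
Conversely, if these values are bounded by `M` at a point `b`, then `g ↦ g b` is dominated by
`M ‖J g‖`, hence extends from the dense range of `J` to a bounded functional on `K`; its Riesz
representative `f` satisfies `g (ι (Cγ f)) = g b` for every `g`, so `ι (Cγ f) = b` by Hahn–Banach.
-/

open MeasureTheory ProbabilityTheory

open Metric Set RealInnerProductSpace

section Hilbert

variable {K : Type*} [NormedAddCommGroup K] [InnerProductSpace ℝ K]

theorem isGreatest_inner_image_closedBall (f : K) :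
    IsGreatest ((⟪f, ·⟫) '' closedBall 0 1) ‖f‖ := by
  refine ⟨⟨‖f‖⁻¹ • f, ?_, ?_⟩, ?_⟩
  · rw [mem_closedBall_zero_iff, norm_smul, norm_inv, norm_norm]
    exact inv_mul_le_one
  · simp only [real_inner_smul_right, real_inner_self_eq_norm_sq]
    field_simp
  · rintro _ ⟨k, hk, rfl⟩
    calc ⟪f, k⟫ ≤ ‖f‖ * ‖k‖ := real_inner_le_norm f k
      _ ≤ ‖f‖ := mul_le_of_le_one_right (norm_nonneg f) (mem_closedBall_zero_iff.mp hk)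

theorem isLUB_inner_image_closedBall_inter {D : Set K} (hD : Dense D) (f : K) :
    IsLUB ((⟪f, ·⟫) '' (closedBall 0 1 ∩ D)) ‖f‖ := by
  refine (isLUB_iff_of_subset_of_subset_closure (image_mono inter_subset_left) ?_).2
    (isGreatest_inner_image_closedBall f).isLUB
  calc (⟪f, ·⟫) '' closedBall 0 1 = (⟪f, ·⟫) '' closure (ball 0 1) := by
        rw [closure_ball 0 one_ne_zero]
    _ ⊆ (⟪f, ·⟫) '' closure (ball 0 1 ∩ D) :=
        image_mono (closure_minimal (hD.open_subset_closure_inter isOpen_ball) isClosed_closure)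
    _ ⊆ closure ((⟪f, ·⟫) '' (ball 0 1 ∩ D)) :=
        image_closure_subset_closure_image (continuous_const.inner continuous_id)
    _ ⊆ closure ((⟪f, ·⟫) '' (closedBall 0 1 ∩ D)) :=
        closure_mono (image_mono (inter_subset_inter_left _ ball_subset_closedBall))

theorem exists_inner_eq_of_norm_le_mul_norm [CompleteSpace K] {E : Type*} [AddCommGroup E]
    [Module ℝ E] {T : E →ₗ[ℝ] K} (hT : DenseRange T) {φ : E →ₗ[ℝ] ℝ} {C : ℝ}
    (hφ : ∀ x, ‖φ x‖ ≤ C * ‖T x‖) : ∃ f : K, ∀ x, ⟪f, T x⟫ = φ x :=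
  ⟨(InnerProductSpace.toDual ℝ K).symm (φ.extendOfNorm T), fun x => by
    rw [InnerProductSpace.toDual_symm_apply, LinearMap.extendOfNorm_eq hT ⟨C, hφ⟩]⟩

end Hilbert

theorem norm_le_mul_norm_of_forall_norm_le_one {E F : Type*} [AddCommGroup E] [Module ℝ E]
    [SeminormedAddCommGroup F] [NormedSpace ℝ F] {T : E →ₗ[ℝ] F} {φ : E →ₗ[ℝ] ℝ} {M : ℝ}
    (hφ : ∀ x, ‖T x‖ ≤ 1 → φ x ≤ M) (x : E) : ‖φ x‖ ≤ M * ‖T x‖ := by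
  suffices h : ∀ x, φ x ≤ M * ‖T x‖ by
    rw [Real.norm_eq_abs, abs_le]
    exact ⟨by simpa [neg_le] using h (-x), h x⟩
  intro x
  have hscale : ∀ c ∈ Ioi ‖T x‖, φ x ≤ M * c := by
    intro c hc
    have hc0 : 0 < c := (norm_nonneg _).trans_lt hc
    have := hφ (c⁻¹ • x) (by
      rw [map_smul, norm_smul, norm_inv, Real.norm_of_nonneg hc0.le]
      exact inv_mul_le_one_of_le₀ (le_of_lt hc) hc0.le)
    rwa [map_smul, smul_eq_mul, inv_mul_le_iff₀ hc0, mul_comm] at this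
  exact ge_of_tendsto ((continuous_const_mul M).tendsto _ |>.mono_left nhdsWithin_le_nhds)
    (eventually_nhdsWithin_of_forall hscale)

section L2

variable {Ω : Type*} [MeasurableSpace Ω] {μ : Measure Ω}
  {K : Type*} [NormedAddCommGroup K] [InnerProductSpace ℝ K] (e : K →ₗᵢ[ℝ] Lp ℝ 2 μ)

theorem integral_mul_eq_inner_of_ae_eq {k : K} {g : Ω → ℝ} (hk : e k =ᵐ[μ] g) (f : K) :
    ∫ x, e f x * g x ∂μ = ⟪f, k⟫ := by
  rw [← e.inner_map_map, L2.inner_def]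
  refine integral_congr_ae (hk.mono fun x hx => ?_)
  simp [hx, mul_comm]

theorem integral_sq_eq_norm_sq_of_ae_eq {k : K} {g : Ω → ℝ} (hk : e k =ᵐ[μ] g) :
    ∫ x, g x ^ 2 ∂μ = ‖k‖ ^ 2 := by
  rw [← real_inner_self_eq_norm_sq, ← integral_mul_eq_inner_of_ae_eq e hk]
  refine integral_congr_ae (hk.mono fun x hx => ?_)
  simp [hx, sq]

theorem eq_of_ae_eq_of_ae_eq {k₁ k₂ : K} {g : Ω → ℝ} (h₁ : e k₁ =ᵐ[μ] g) (h₂ : e k₂ =ᵐ[μ] g) :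
    k₁ = k₂ :=
  e.injective (Lp.ext (h₁.trans h₂.symm))

theorem coeFn_map_add_ae_eq {k₁ k₂ : K} {g₁ g₂ : Ω → ℝ} (h₁ : e k₁ =ᵐ[μ] g₁)
    (h₂ : e k₂ =ᵐ[μ] g₂) : e (k₁ + k₂) =ᵐ[μ] g₁ + g₂ := by
  rw [map_add]
  exact (Lp.coeFn_add _ _).trans (h₁.add h₂)

theorem coeFn_map_smul_ae_eq {k : K} {g : Ω → ℝ} (h : e k =ᵐ[μ] g) (c : ℝ) :
    e (c • k) =ᵐ[μ] c • g := by
  rw [map_smul]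
  exact (Lp.coeFn_smul _ _).trans (h.const_smul c)

end L2

section DualToRKHS

variable {B : Type*} [NormedAddCommGroup B] [NormedSpace ℝ B] [MeasurableSpace B]
  {γ : Measure B} {K : Type*} [NormedAddCommGroup K] [InnerProductSpace ℝ K]
  (e : K →ₗᵢ[ℝ] Lp ℝ 2 γ) (hsub : ∀ g : B →L[ℝ] ℝ, ∃ k : K, e k =ᵐ[γ] g)

-- The embedding `B* → B*_γ`; it is linear because `e` is injective.
noncomputable def dualToRKHS : (B →L[ℝ] ℝ) →ₗ[ℝ] K where
  toFun g := (hsub g).choose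
  map_add' g₁ g₂ := eq_of_ae_eq_of_ae_eq e (hsub _).choose_spec
    (coeFn_map_add_ae_eq e (hsub g₁).choose_spec (hsub g₂).choose_spec)
  map_smul' c g := eq_of_ae_eq_of_ae_eq e (hsub _).choose_spec
    (coeFn_map_smul_ae_eq e (hsub g).choose_spec c)

theorem coeFn_dualToRKHS (g : B →L[ℝ] ℝ) : e (dualToRKHS e hsub g) =ᵐ[γ] g :=
  (hsub g).choose_spec

theorem range_dualToRKHS :
    range (dualToRKHS e hsub) = {k : K | ∃ g : B →L[ℝ] ℝ, e k =ᵐ[γ] g} := by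
  ext k
  constructor
  · rintro ⟨g, rfl⟩
    exact ⟨g, coeFn_dualToRKHS e hsub g⟩
  · rintro ⟨g, hg⟩
    exact ⟨g, eq_of_ae_eq_of_ae_eq e (coeFn_dualToRKHS e hsub g) hg⟩

end DualToRKHS

theorem cameronMartin_norm_sup_characterization_general
    {B : Type*} [NormedAddCommGroup B] [NormedSpace ℝ B] [MeasurableSpace B]
    (γ : Measure B)
    {K : Type*} [NormedAddCommGroup K] [InnerProductSpace ℝ K] [CompleteSpace K]
    (e : K →ₗᵢ[ℝ] Lp ℝ 2 γ)
    (hsub : ∀ g : B →L[ℝ] ℝ, ∃ f : K, (e f : B → ℝ) =ᵐ[γ] g)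
    (hdense : Dense {f : K | ∃ g : B →L[ℝ] ℝ, (e f : B → ℝ) =ᵐ[γ] ⇑g})
    {Hγ : Type*} [NormedAddCommGroup Hγ] [InnerProductSpace ℝ Hγ]
    (ι : Hγ →L[ℝ] B)
    (Cγ : K ≃ₗᵢ[ℝ] Hγ)
    (hCγ : ∀ (f : K) (g : B →L[ℝ] ℝ), g (ι (Cγ f)) = ∫ x, (e f : B → ℝ) x * g x ∂γ) :
    (∀ h : Hγ, ‖h‖ =
      sSup {r : ℝ | ∃ f : B →L[ℝ] ℝ, (∫ x, (f x) ^ 2 ∂γ) ≤ 1 ∧ f (ι h) = r}) ∧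
    Set.range ι =
      {b : B | BddAbove {r : ℝ | ∃ f : B →L[ℝ] ℝ, (∫ x, (f x) ^ 2 ∂γ) ≤ 1 ∧ f b = r}} := by
  set J := dualToRKHS e hsub
  have hJ : DenseRange J := by rwa [DenseRange, range_dualToRKHS]
  have hunit (g : B →L[ℝ] ℝ) : ∫ x, g x ^ 2 ∂γ ≤ 1 ↔ ‖J g‖ ≤ 1 := by
    rw [integral_sq_eq_norm_sq_of_ae_eq e (coeFn_dualToRKHS e hsub g),
      sq_le_one_iff₀ (norm_nonneg _)]
  have hpair (f : K) (g : B →L[ℝ] ℝ) : g (ι (Cγ f)) = ⟪f, J g⟫ :=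
    (hCγ f g).trans (integral_mul_eq_inner_of_ae_eq e (coeFn_dualToRKHS e hsub g) f)
  have hlub (h : Hγ) :
      IsLUB {r : ℝ | ∃ g : B →L[ℝ] ℝ, ∫ x, g x ^ 2 ∂γ ≤ 1 ∧ g (ι h) = r} ‖h‖ := by
    obtain ⟨f, rfl⟩ := Cγ.surjective h
    convert isLUB_inner_image_closedBall_inter hJ f using 1
    · rw [← image_preimage_eq_inter_range, image_image]
      simp only [hunit, hpair, image, preimage, mem_closedBall_zero_iff, mem_ofPred_eq]
    · exact Cγ.norm_map f
  refine ⟨fun h => ((hlub h).csSup_eq ⟨0, 0, by simp, by simp⟩).symm, ?_⟩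
  ext b
  refine ⟨?_, fun ⟨M, hM⟩ => ?_⟩
  · rintro ⟨h, rfl⟩
    exact (hlub h).bddAbove
  · obtain ⟨f, hf⟩ := exists_inner_eq_of_norm_le_mul_norm hJ
      (norm_le_mul_norm_of_forall_norm_le_one
        (φ := (ContinuousLinearMap.apply ℝ ℝ b).toLinearMap)
        fun g hg => hM ⟨g, (hunit g).2 hg, rfl⟩)
    exact ⟨Cγ f, SeparatingDual.eq_iff_forall_dual_eq.2 fun g => (hpair f g).trans (hf g)⟩

/-- Let `γ` be a centered Gaussian measure on a separable Banach space `B`,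
with RKHS `K = B*_γ` (closure of `B*` in `L²(γ)`) and Cameron–Martin space `H(γ) = C_γ(B*_γ)`
realized as a Hilbert space `Hγ` embedded in `B` via `ι`, where `C_γ : K ≃ₗᵢ Hγ` is the
covariance isometry, `g(ι(C_γ f)) = ∫ f g dγ`. Then the Cameron–Martin norm satisfies
`|h|_{H(γ)} = sup { f(h) : f ∈ B*, C_γ(f)(f) = ∫ f² dγ ≤ 1 }`, and
`H(γ) = { h ∈ B : |h|_{H(γ)} < ∞ }` (finiteness expressed as boundedness of the set of values). -/
theorem cameronMartin_norm_sup_characterization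
    {B : Type*} [NormedAddCommGroup B] [NormedSpace ℝ B] [CompleteSpace B]
    [TopologicalSpace.SeparableSpace B] [MeasurableSpace B] [BorelSpace B]
    (γ : Measure B) [IsProbabilityMeasure γ] (hγ : IsCenteredGaussian γ)
    {K : Type*} [NormedAddCommGroup K] [InnerProductSpace ℝ K] [CompleteSpace K]
    (e : K →ₗᵢ[ℝ] Lp ℝ 2 γ)
    (hsub : ∀ g : B →L[ℝ] ℝ, ∃ f : K, (e f : B → ℝ) =ᵐ[γ] g)
    (hdense : Dense {f : K | ∃ g : B →L[ℝ] ℝ, (e f : B → ℝ) =ᵐ[γ] ⇑g})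
    {Hγ : Type*} [NormedAddCommGroup Hγ] [InnerProductSpace ℝ Hγ] [CompleteSpace Hγ]
    (ι : Hγ →L[ℝ] B) (hι : Function.Injective ι)
    (Cγ : K ≃ₗᵢ[ℝ] Hγ)
    (hCγ : ∀ (f : K) (g : B →L[ℝ] ℝ), g (ι (Cγ f)) = ∫ x, (e f : B → ℝ) x * g x ∂γ) :
    (∀ h : Hγ, ‖h‖ =
      sSup {r : ℝ | ∃ f : B →L[ℝ] ℝ, (∫ x, (f x) ^ 2 ∂γ) ≤ 1 ∧ f (ι h) = r}) ∧
    Set.range ι =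
      {b : B | BddAbove {r : ℝ | ∃ f : B →L[ℝ] ℝ, (∫ x, (f x) ^ 2 ∂γ) ≤ 1 ∧ f b = r}} :=
  cameronMartin_norm_sup_characterization_general γ e hsub hdense ι Cγ hCγ
end
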